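/- Let p ≥ 1 and let J = J({a_k},{b_k}) be a self-adjoint Jacobi matrix (a_k > 0, b_k ∈ ℝ, a_k → 1, b_k → 0). Then every eigenvalue λ(J) of J satisfies, for each choice of sign ±, (λ(J) ∓ 2)_±^p ≤ 3^{p−1} · Σ_{k=1}^∞ ( (b_k)_±^p + 2|a_k − 1|^p ). -/

import Mathlib

/- Let `u` be an eigenvector and `n` a coordinate where `|u_k|` is largest; it exists because
`u ∈ ℓ²` is nonzero, so `u_k → 0`. The eigenvalue equation at `n` gives the Gershgorin bound
`|λ - b_n| ≤ |a_{n-1}| + |a_n|`, hence `λ - 2 ≤ b_n + |a_{n-1} - 1| + |a_n - 1|`, and likewise for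
`-λ - 2` with `-b_n`. The power mean inequality `(x + y + z)^p ≤ 3^{p-1} (x^p + y^p + z^p)` turns
this into a bound by three terms of the series. -/

open scoped ENNReal

noncomputable section

/-- The Hilbert space ℓ²(ℕ). -/
abbrev l2 : Type := lp (fun _ : ℕ => ℂ) 2

/-- `z` is an eigenvalue of `T`. -/
def HasEigen (T : l2 →L[ℂ] l2) (z : ℂ) : Prop := ∃ u : l2, u ≠ 0 ∧ T u = z • u

/-- `J` is the complex Jacobi matrix with off-diagonal entries `a` and diagonal
entries `b` (`a 0 = a₁, b 0 = b₁`, etc.). -/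
def IsJacobi (J : l2 →L[ℂ] l2) (a b : ℕ → ℂ) : Prop :=
  ∀ u : l2, ∀ k : ℕ,
    (J u : ∀ _ : ℕ, ℂ) k =
      (if k = 0 then 0 else a (k - 1) * (u : ∀ _ : ℕ, ℂ) (k - 1))
      + b k * (u : ∀ _ : ℕ, ℂ) k + a k * (u : ∀ _ : ℕ, ℂ) (k + 1)

theorem Memℓp.exists_forall_norm_le {ι : Type*} {E : ι → Type*} [∀ i, NormedAddCommGroup (E i)]
    {p : ℝ≥0∞} (hp : 0 < p.toReal) {f : ∀ i, E i} (hf : Memℓp f p) {i₀ : ι} (hi₀ : f i₀ ≠ 0) :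
    ∃ i, ∀ j, ‖f j‖ ≤ ‖f i‖ := by
  have hlarge : {j | ‖f i₀‖ ≤ ‖f j‖}.Finite := by
    have hsmall := (hf.summable hp).tendsto_cofinite_zero.eventually_lt_const
      (Real.rpow_pos_of_pos (norm_pos_iff.2 hi₀) p.toReal)
    refine (Filter.eventually_cofinite.1 hsmall).subset fun j hj => ?_
    exact (Real.rpow_le_rpow (norm_nonneg _) hj hp.le).not_gt
  obtain ⟨i, hi, hmax⟩ := hlarge.toFinset.exists_max_image (‖f ·‖) ⟨i₀, by simp⟩
  refine ⟨i, fun j => ?_⟩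
  by_cases hj : ‖f i₀‖ ≤ ‖f j‖
  · exact hmax j (by simpa using hj)
  · exact (not_le.1 hj).le.trans (by simpa using hi)

/-- At `n = 0` the summand `‖a (n - 1)‖ = ‖a 0‖` comes from truncated subtraction and is spare. -/
theorem IsJacobi.exists_norm_sub_le_of_hasEigen {J : l2 →L[ℂ] l2} {a b : ℕ → ℂ}
    (hJ : IsJacobi J a b) {z : ℂ} (hz : HasEigen J z) :
    ∃ n, ‖z - b n‖ ≤ ‖a (n - 1)‖ + ‖a n‖ := by
  obtain ⟨u, hu, hJu⟩ := hz
  obtain ⟨i₀, hi₀⟩ : ∃ i, u i ≠ 0 := by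
    by_contra! h
    exact hu (lp.ext (funext h))
  obtain ⟨n, hn⟩ := (lp.memℓp u).exists_forall_norm_le (by norm_num) hi₀
  have hun : 0 < ‖u n‖ := (norm_pos_iff.2 hi₀).trans_le (hn i₀)
  have heigen : (z - b n) * u n
      = (if n = 0 then 0 else a (n - 1) * u (n - 1)) + a n * u (n + 1) := by
    have := hJ u n
    rw [hJu, lp.coeFn_smul, Pi.smul_apply, smul_eq_mul] at this
    linear_combination this
  have hleft : ‖if n = 0 then 0 else a (n - 1) * u (n - 1)‖ ≤ ‖a (n - 1)‖ * ‖u n‖ := by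
    split_ifs
    · simp only [norm_zero]; positivity
    · rw [norm_mul]; gcongr; exact hn _
  refine ⟨n, le_of_mul_le_mul_right ?_ hun⟩
  calc ‖z - b n‖ * ‖u n‖ = ‖(if n = 0 then 0 else a (n - 1) * u (n - 1)) + a n * u (n + 1)‖ := by
        rw [← heigen, norm_mul]
    _ ≤ ‖a (n - 1)‖ * ‖u n‖ + ‖a n‖ * ‖u (n + 1)‖ :=
        (norm_add_le _ _).trans (add_le_add hleft (norm_mul_le _ _))
    _ ≤ (‖a (n - 1)‖ + ‖a n‖) * ‖u n‖ := by rw [add_mul]; gcongr; exact hn _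

theorem Real.add_add_rpow_le {p x y z : ℝ} (hp : 1 ≤ p) (hx : 0 ≤ x) (hy : 0 ≤ y) (hz : 0 ≤ z) :
    (x + y + z) ^ p ≤ 3 ^ (p - 1) * (x ^ p + y ^ p + z ^ p) := by
  have := Real.rpow_sum_le_const_mul_sum_rpow_of_nonneg (s := Finset.univ) (f := ![x, y, z]) hp
    (by simp [Fin.forall_fin_succ, hx, hy, hz])
  simpa [Fin.sum_univ_three] using this

theorem ENNReal.add_add_le_tsum_add_two_mul {α : Type*} (f g : α → ℝ≥0∞) (n m : α) :
    f n + g m + g n ≤ ∑' k, (f k + 2 * g k) := by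
  rw [ENNReal.tsum_add, ENNReal.tsum_mul_left, two_mul, ← add_assoc]
  gcongr <;> exact ENNReal.le_tsum _

theorem max_sub_two_le_of_sub_le {x y a₁ a₂ : ℝ} (h : x - y ≤ |a₁| + |a₂|) :
    max (x - 2) 0 ≤ max y 0 + |a₁ - 1| + |a₂ - 1| := by
  have h₁ : |a₁| ≤ |a₁ - 1| + 1 := by simpa using abs_sub_abs_le_abs_sub a₁ 1
  have h₂ : |a₂| ≤ |a₂ - 1| + 1 := by simpa using abs_sub_abs_le_abs_sub a₂ 1
  refine max_le ?_ (by positivity)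
  linarith [le_max_left y 0]

theorem ofReal_rpow_le_three_rpow_mul_tsum_of_le {α : Type*} {p c : ℝ} (hp : 1 ≤ p) (hc : 0 ≤ c)
    {A B : α → ℝ} (hA : ∀ k, 0 ≤ A k) (hB : ∀ k, 0 ≤ B k) {n m : α} (h : c ≤ A n + B m + B n) :
    ENNReal.ofReal (c ^ p) ≤ ENNReal.ofReal (3 ^ (p - 1)) *
      ∑' k, (ENNReal.ofReal (A k ^ p) + 2 * ENNReal.ofReal (B k ^ p)) := by
  have hpow : ∀ x : ℝ, 0 ≤ x → 0 ≤ x ^ p := fun x hx => Real.rpow_nonneg hx p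
  calc ENNReal.ofReal (c ^ p)
      ≤ ENNReal.ofReal (3 ^ (p - 1) * (A n ^ p + B m ^ p + B n ^ p)) :=
        ENNReal.ofReal_le_ofReal <| (Real.rpow_le_rpow hc h (by linarith)).trans <|
          Real.add_add_rpow_le hp (hA n) (hB m) (hB n)
    _ = ENNReal.ofReal (3 ^ (p - 1)) *
        (ENNReal.ofReal (A n ^ p) + ENNReal.ofReal (B m ^ p) + ENNReal.ofReal (B n ^ p)) := by
        rw [ENNReal.ofReal_mul (by positivity),
          ENNReal.ofReal_add (add_nonneg (hpow _ (hA n)) (hpow _ (hB m))) (hpow _ (hB n)),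
          ENNReal.ofReal_add (hpow _ (hA n)) (hpow _ (hB m))]
    _ ≤ _ := by gcongr; exact ENNReal.add_add_le_tsum_add_two_mul _ _ n m

theorem single_eigenvalue_selfadjoint_large_coupling_general
    (a b : ℕ → ℝ)
    (J : l2 →L[ℂ] l2)
    (hJ : IsJacobi J (fun k => ((a k : ℝ) : ℂ)) (fun k => ((b k : ℝ) : ℂ)))
    (p : ℝ) (hp : 1 ≤ p)
    (lam : ℝ) (hlam : HasEigen J ((lam : ℝ) : ℂ)) :
    (ENNReal.ofReal ((max (lam - 2) 0) ^ p)
      ≤ ENNReal.ofReal ((3:ℝ) ^ (p - 1)) *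
        ∑' k : ℕ, (ENNReal.ofReal ((max (b k) 0) ^ p)
          + 2 * ENNReal.ofReal (|a k - 1| ^ p)))
    ∧ (ENNReal.ofReal ((max (-(lam + 2)) 0) ^ p)
      ≤ ENNReal.ofReal ((3:ℝ) ^ (p - 1)) *
        ∑' k : ℕ, (ENNReal.ofReal ((max (-(b k)) 0) ^ p)
          + 2 * ENNReal.ofReal (|a k - 1| ^ p))) := by
  obtain ⟨n, hn⟩ := hJ.exists_norm_sub_le_of_hasEigen hlam
  simp only [← Complex.ofReal_sub, Complex.norm_real, Real.norm_eq_abs] at hn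
  have habs_nonneg : ∀ k, 0 ≤ |a k - 1| := fun k => abs_nonneg _
  constructor
  · exact ofReal_rpow_le_three_rpow_mul_tsum_of_le hp (le_max_right _ _)
      (fun _ => le_max_right _ _) habs_nonneg (max_sub_two_le_of_sub_le ((le_abs_self _).trans hn))
  · have hsub : -lam - -b n ≤ |a (n - 1)| + |a n| := by
      rw [neg_sub_neg]
      exact (le_abs_self _).trans ((abs_sub_comm _ _).trans_le hn)
    rw [neg_add']
    exact ofReal_rpow_le_three_rpow_mul_tsum_of_le hp (le_max_right _ _)
      (fun _ => le_max_right _ _) habs_nonneg (max_sub_two_le_of_sub_le hsub)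

theorem single_eigenvalue_selfadjoint_large_coupling
    (a b : ℕ → ℝ) (hapos : ∀ k, 0 < a k)
    (ha : Filter.Tendsto a Filter.atTop (nhds 1))
    (hb : Filter.Tendsto b Filter.atTop (nhds 0))
    (J : l2 →L[ℂ] l2)
    (hJ : IsJacobi J (fun k => ((a k : ℝ) : ℂ)) (fun k => ((b k : ℝ) : ℂ)))
    (p : ℝ) (hp : 1 ≤ p)
    (lam : ℝ) (hlam : HasEigen J ((lam : ℝ) : ℂ)) :
    (ENNReal.ofReal ((max (lam - 2) 0) ^ p)
      ≤ ENNReal.ofReal ((3:ℝ) ^ (p - 1)) *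
        ∑' k : ℕ, (ENNReal.ofReal ((max (b k) 0) ^ p)
          + 2 * ENNReal.ofReal (|a k - 1| ^ p)))
    ∧ (ENNReal.ofReal ((max (-(lam + 2)) 0) ^ p)
      ≤ ENNReal.ofReal ((3:ℝ) ^ (p - 1)) *
        ∑' k : ℕ, (ENNReal.ofReal ((max (-(b k)) 0) ^ p)
          + 2 * ENNReal.ofReal (|a k - 1| ^ p))) :=
  single_eigenvalue_selfadjoint_large_coupling_general a b J hJ p hp lam hlam
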